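/- Assume (A1), (A2), let φ: X → ℝ be bounded measurable, let g_s(x) = Σ_{k=0}^∞ (P_s^k φ̄)(x), and suppose the adaptation is weakly (resp. strongly) p-waning for some p > 0. Then A_n/n^p → 0 as n → ∞ in probability (resp. almost surely). -/

import Mathlib

/-!
Each `g_s` solves the Poisson equation `g_s = φ̄ + P_s g_s`, is bounded by `2‖φ̄‖∞ C / (1 - ρ)`
and has `π`-mean zero. For two kernels the difference `h = g_s - g_{s'}` satisfies
`h - P_{s'} h = (P_s - P_{s'}) g_s`, so `m` steps of `P_{s'}` move `h` by at most `2 m ‖g_s‖∞ d`,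
where `d` bounds the total variation distance between the two kernels. Choosing `m` with
`C ρ^m ≤ 1/4`, ergodicity of `P_{s'}` maps the `π`-centred `h` to at most half its sup norm, hence
`‖h‖∞ ≤ 4 m ‖g_s‖∞ d`. Therefore `|A_n| ≤ K ∑_{k ≤ n} D_k`, and both modes of convergence follow
by domination.
-/

open MeasureTheory Filter Finset ProbabilityTheory
open scoped ENNReal NNReal Topology

/-- Total variation distance between two measures: `sup_A |μ(A) - ν(A)|`. -/
noncomputable def tvDist {X : Type*} [MeasurableSpace X] (μ ν : Measure X) : ℝ :=
  ⨆ A : {A : Set X // MeasurableSet A}, |(μ A.1).toReal - (ν A.1).toReal|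

/-- `iterK P s k x` is the `k`-step transition probability `P_s^k(x, ·)`. -/
noncomputable def iterK {S X : Type*} [MeasurableSpace X]
    (P : S → X → Measure X) (s : S) : ℕ → X → Measure X
  | 0 => fun x => Measure.dirac x
  | n + 1 => fun x => (P s x).bind (iterK P s n)

/-- Supremum norm `‖f‖_∞ = sup_x |f x|`. -/
noncomputable def supNorm {X : Type*} (f : X → ℝ) : ℝ := ⨆ x, |f x|

/-- Oscillation `osc(f) = sup_x f x - inf_x f x`. -/
noncomputable def osc {X : Type*} (f : X → ℝ) : ℝ := (⨆ x, f x) - (⨅ x, f x)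

/-- The solution of the Poisson equation: `g_s x = Σ_{k=0}^∞ (P_s^k φ̄)(x)`
where `φ̄ = φ - π(φ)`. -/
noncomputable def gfun {S X : Type*} [MeasurableSpace X]
    (P : S → X → Measure X) (π : Measure X) (φ : X → ℝ) (s : S) (x : X) : ℝ :=
  ∑' k : ℕ, ∫ y, (φ y - ∫ z, φ z ∂π) ∂(iterK P s k x)

/-- `Pg P π φ s x = (P_s g_s)(x)`. -/
noncomputable def Pg {S X : Type*} [MeasurableSpace X]
    (P : S → X → Measure X) (π : Measure X) (φ : X → ℝ) (s : S) (x : X) : ℝ :=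
  ∫ y, gfun P π φ s y ∂(P s x)

section BoundedIntegrand
variable {X : Type*} [MeasurableSpace X] {f : X → ℝ} {B : ℝ}

lemma integrable_of_abs_le {μ : Measure X} [IsFiniteMeasure μ] (hf : Measurable f)
    (hfB : ∀ x, |f x| ≤ B) : Integrable f μ :=
  .of_bound hf.aestronglyMeasurable B (ae_of_all _ fun x => (Real.norm_eq_abs _).trans_le (hfB x))

lemma abs_integral_le_of_abs_le {μ : Measure X} [IsProbabilityMeasure μ]
    (hfB : ∀ x, |f x| ≤ B) : |∫ x, f x ∂μ| ≤ B := by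
  simpa using norm_integral_le_of_norm_le_const (μ := μ)
    (ae_of_all _ fun x => (Real.norm_eq_abs _).trans_le (hfB x))

lemma integral_bind_kernel {Y : Type*} [MeasurableSpace Y] {μ : Measure Y}
    [IsProbabilityMeasure μ] {κ : Kernel Y X} [IsMarkovKernel κ] (hf : Measurable f)
    (hfB : ∀ x, |f x| ≤ B) :
    ∫ x, f x ∂(μ.bind κ) = ∫ y, ∫ x, f x ∂κ y ∂μ := by
  rw [Measure.comp_eq_comp_const_apply, Kernel.integral_comp (integrable_of_abs_le hf hfB),
    Kernel.const_apply]

lemma measurable_integral_kernel {Y : Type*} [MeasurableSpace Y] {κ : Kernel Y X}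
    (hf : Measurable f) : Measurable fun y => ∫ x, f x ∂κ y :=
  hf.stronglyMeasurable.integral_kernel.measurable

end BoundedIntegrand

section TotalVariation
variable {X : Type*} [MeasurableSpace X]

lemma abs_measureReal_sub_le_tvDist (μ ν : Measure X) [IsProbabilityMeasure μ]
    [IsProbabilityMeasure ν] {A : Set X} (hA : MeasurableSet A) :
    |μ.real A - ν.real A| ≤ tvDist μ ν := by
  refine le_ciSup (f := fun A : {A : Set X // MeasurableSet A} => |μ.real A - ν.real A|)
    ⟨1, ?_⟩ ⟨A, hA⟩
  rintro _ ⟨A, rfl⟩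
  exact abs_sub_le_of_nonneg_of_le measureReal_nonneg measureReal_le_one measureReal_nonneg
    measureReal_le_one

lemma tvDist_nonneg (μ ν : Measure X) [IsProbabilityMeasure μ] [IsProbabilityMeasure ν] :
    0 ≤ tvDist μ ν :=
  (abs_nonneg _).trans (abs_measureReal_sub_le_tvDist μ ν MeasurableSet.empty)

lemma abs_integral_sub_integral_le_of_le {μ ν : Measure X} [IsFiniteMeasure μ] (hνμ : ν ≤ μ)
    {f : X → ℝ} {B : ℝ} (hf : Measurable f) (hfB : ∀ x, |f x| ≤ B) :
    |∫ x, f x ∂μ - ∫ x, f x ∂ν| ≤ B * (μ.real Set.univ - ν.real Set.univ) := by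
  have : IsFiniteMeasure ν := isFiniteMeasure_of_le μ hνμ
  have hsplit : ∫ x, f x ∂μ = ∫ x, f x ∂(μ - ν) + ∫ x, f x ∂ν := by
    rw [← integral_add_measure (integrable_of_abs_le hf hfB) (integrable_of_abs_le hf hfB),
      Measure.sub_add_cancel_of_le hνμ]
  have hmass : (μ - ν).real Set.univ = μ.real Set.univ - ν.real Set.univ := by
    rw [measureReal_def, Measure.sub_apply .univ hνμ,
      ENNReal.toReal_sub_of_le (hνμ _) (measure_ne_top _ _)]
    rfl
  rw [hsplit, add_sub_cancel_right, ← hmass]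
  exact norm_integral_le_of_norm_le_const
    (ae_of_all _ fun x => (Real.norm_eq_abs _).trans_le (hfB x))

lemma abs_integral_sub_integral_le_tvDist {μ ν : Measure X} [IsProbabilityMeasure μ]
    [IsProbabilityMeasure ν] {f : X → ℝ} {B : ℝ} (hf : Measurable f) (hfB : ∀ x, |f x| ≤ B) :
    |∫ x, f x ∂μ - ∫ x, f x ∂ν| ≤ 2 * B * tvDist μ ν := by
  obtain ⟨s, hs⟩ := exists_isHahnDecomposition ν μ
  have hB : 0 ≤ B := (abs_nonneg _).trans (hfB (nonempty_of_isProbabilityMeasure μ).some)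
  have hon : |∫ x in s, f x ∂μ - ∫ x in s, f x ∂ν| ≤ B * tvDist μ ν := by
    refine (abs_integral_sub_integral_le_of_le hs.le_on hf hfB).trans ?_
    simp only [measureReal_restrict_apply_univ]
    exact mul_le_mul_of_nonneg_left ((le_abs_self _).trans
      (abs_measureReal_sub_le_tvDist μ ν hs.measurableSet)) hB
  have hoff : |∫ x in sᶜ, f x ∂ν - ∫ x in sᶜ, f x ∂μ| ≤ B * tvDist μ ν := by
    refine (abs_integral_sub_integral_le_of_le hs.ge_on_compl hf hfB).trans ?_
    simp only [measureReal_restrict_apply_univ]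
    exact mul_le_mul_of_nonneg_left ((le_abs_self _).trans ((abs_sub_comm _ _).trans_le
      (abs_measureReal_sub_le_tvDist μ ν hs.measurableSet.compl))) hB
  rw [← integral_add_compl hs.measurableSet (integrable_of_abs_le (μ := μ) hf hfB),
    ← integral_add_compl hs.measurableSet (integrable_of_abs_le (μ := ν) hf hfB)]
  calc _ = |(∫ x in s, f x ∂μ - ∫ x in s, f x ∂ν) - (∫ x in sᶜ, f x ∂ν - ∫ x in sᶜ, f x ∂μ)| := by
        ring_nf
    _ ≤ B * tvDist μ ν + B * tvDist μ ν := (abs_sub _ _).trans (add_le_add hon hoff)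
    _ = 2 * B * tvDist μ ν := by ring

end TotalVariation

namespace ProbabilityTheory.Kernel
variable {X : Type*} [MeasurableSpace X]

instance isMarkovKernel_pow (κ : Kernel X X) [IsMarkovKernel κ] :
    ∀ n : ℕ, IsMarkovKernel (κ ^ n)
  | 0 => inferInstanceAs (IsMarkovKernel Kernel.id)
  | n + 1 =>
    have := isMarkovKernel_pow κ n
    inferInstanceAs (IsMarkovKernel ((κ ^ n) ∘ₖ κ))

lemma pow_zero_apply (κ : Kernel X X) (x : X) : (κ ^ 0) x = Measure.dirac x :=
  id_apply x

lemma pow_succ_apply (κ : Kernel X X) (n : ℕ) (x : X) :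
    (κ ^ (n + 1)) x = (κ x).bind ⇑(κ ^ n) :=
  comp_apply _ _ _

lemma bind_pow_eq_self {π : Measure X} {κ : Kernel X X} (hπ : π.bind κ = π) (n : ℕ) :
    π.bind ⇑(κ ^ n) = π := by
  induction n with
  | zero => exact Measure.id_comp
  | succ n ih =>
    change ((κ ^ n) ∘ₖ κ) ∘ₘ π = π
    rw [← Measure.comp_assoc, hπ, ih]

end ProbabilityTheory.Kernel

noncomputable def poissonSol {X : Type*} [MeasurableSpace X] (κ : Kernel X X) (f : X → ℝ)
    (x : X) : ℝ :=
  ∑' k : ℕ, ∫ y, f y ∂(κ ^ k) x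

section PoissonEquation
variable {X : Type*} [MeasurableSpace X] {π : Measure X} [IsProbabilityMeasure π]
  {κ : Kernel X X} [IsMarkovKernel κ] {f : X → ℝ} {B C ρ : ℝ}

lemma abs_integral_pow_le (hf : Measurable f) (hfB : ∀ x, |f x| ≤ B) (hfπ : ∫ x, f x ∂π = 0)
    (hκ : ∀ k x, tvDist ((κ ^ k) x) π ≤ C * ρ ^ k) (k : ℕ) (x : X) :
    |∫ y, f y ∂(κ ^ k) x| ≤ 2 * B * C * ρ ^ k := by
  have hB : 0 ≤ B := (abs_nonneg _).trans (hfB x)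
  have h := abs_integral_sub_integral_le_tvDist (μ := (κ ^ k) x) (ν := π) hf hfB
  rw [hfπ, sub_zero] at h
  rw [mul_assoc _ C]
  exact h.trans (mul_le_mul_of_nonneg_left (hκ k x) (by positivity))

lemma summable_integral_pow (hf : Measurable f) (hfB : ∀ x, |f x| ≤ B)
    (hfπ : ∫ x, f x ∂π = 0) (hρ : ρ ∈ Set.Ico 0 1)
    (hκ : ∀ k x, tvDist ((κ ^ k) x) π ≤ C * ρ ^ k) (x : X) :
    Summable fun k => ∫ y, f y ∂(κ ^ k) x :=
  ((hasSum_geometric_of_lt_one hρ.1 hρ.2).mul_left _).summable.of_norm_bounded fun k =>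
    (Real.norm_eq_abs _).trans_le (abs_integral_pow_le hf hfB hfπ hκ k x)

lemma abs_poissonSol_le (hf : Measurable f) (hfB : ∀ x, |f x| ≤ B) (hfπ : ∫ x, f x ∂π = 0)
    (hρ : ρ ∈ Set.Ico 0 1) (hκ : ∀ k x, tvDist ((κ ^ k) x) π ≤ C * ρ ^ k) (x : X) :
    |poissonSol κ f x| ≤ 2 * B * C * (1 - ρ)⁻¹ :=
  tsum_of_norm_bounded ((hasSum_geometric_of_lt_one hρ.1 hρ.2).mul_left _) fun k =>
    (Real.norm_eq_abs _).trans_le (abs_integral_pow_le hf hfB hfπ hκ k x)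

lemma measurable_poissonSol (hf : Measurable f) (hfB : ∀ x, |f x| ≤ B)
    (hfπ : ∫ x, f x ∂π = 0) (hρ : ρ ∈ Set.Ico 0 1)
    (hκ : ∀ k x, tvDist ((κ ^ k) x) π ≤ C * ρ ^ k) : Measurable (poissonSol κ f) :=
  measurable_of_tendsto_metrizable
    (fun n => Finset.measurable_sum (Finset.range n) fun _ _ => measurable_integral_kernel hf)
    (tendsto_pi_nhds.2 fun x => (summable_integral_pow hf hfB hfπ hρ hκ x).hasSum.tendsto_sum_nat)

lemma integral_poissonSol (hf : Measurable f) (hfB : ∀ x, |f x| ≤ B) (hfπ : ∫ x, f x ∂π = 0)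
    (hρ : ρ ∈ Set.Ico 0 1) (hκ : ∀ k x, tvDist ((κ ^ k) x) π ≤ C * ρ ^ k)
    (μ : Measure X) [IsProbabilityMeasure μ] :
    ∫ x, poissonSol κ f x ∂μ = ∑' k, ∫ x, ∫ y, f y ∂(κ ^ k) x ∂μ := by
  have hbound := abs_integral_pow_le hf hfB hfπ hκ
  refine (integral_tsum_of_summable_integral_norm
    (fun k => integrable_of_abs_le (measurable_integral_kernel hf) (hbound k)) ?_).symm
  refine ((hasSum_geometric_of_lt_one hρ.1 hρ.2).mul_left (2 * B * C)).summable.of_nonneg_of_le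
    (fun k => integral_nonneg fun x => norm_nonneg _) fun k => ?_
  exact (le_abs_self _).trans (abs_integral_le_of_abs_le fun x =>
    (abs_norm _).trans_le ((Real.norm_eq_abs _).trans_le (hbound k x)))

lemma poissonSol_eq_add_integral (hf : Measurable f) (hfB : ∀ x, |f x| ≤ B)
    (hfπ : ∫ x, f x ∂π = 0) (hρ : ρ ∈ Set.Ico 0 1)
    (hκ : ∀ k x, tvDist ((κ ^ k) x) π ≤ C * ρ ^ k) (x : X) :
    poissonSol κ f x = f x + ∫ y, poissonSol κ f y ∂κ x := by
  have hstep : ∀ k, ∫ y, ∫ z, f z ∂(κ ^ k) y ∂κ x = ∫ z, f z ∂(κ ^ (k + 1)) x := fun k => by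
    rw [Kernel.pow_succ_apply, integral_bind_kernel hf hfB]
  rw [integral_poissonSol hf hfB hfπ hρ hκ, tsum_congr hstep, poissonSol,
    (summable_integral_pow hf hfB hfπ hρ hκ x).tsum_eq_zero_add, Kernel.pow_zero_apply]
  congr 1
  exact integral_dirac' _ _ hf.stronglyMeasurable

lemma integral_poissonSol_eq_zero (hf : Measurable f) (hfB : ∀ x, |f x| ≤ B)
    (hfπ : ∫ x, f x ∂π = 0) (hρ : ρ ∈ Set.Ico 0 1)
    (hκ : ∀ k x, tvDist ((κ ^ k) x) π ≤ C * ρ ^ k) (hπ : π.bind κ = π) :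
    ∫ x, poissonSol κ f x ∂π = 0 := by
  rw [integral_poissonSol hf hfB hfπ hρ hκ]
  simp_rw [← integral_bind_kernel hf hfB, Kernel.bind_pow_eq_self hπ, hfπ, tsum_zero]

end PoissonEquation
lemma abs_le_two_mul_of_abs_le_add_half {α : Type*} {h : α → ℝ} {a : ℝ}
    (hbdd : BddAbove (Set.range fun x => |h x|))
    (himp : ∀ M, (∀ x, |h x| ≤ M) → ∀ x, |h x| ≤ a + M / 2) (x : α) : |h x| ≤ 2 * a := by
  have : Nonempty α := ⟨x⟩
  have hM : ∀ x, |h x| ≤ ⨆ y, |h y| := le_ciSup hbdd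
  have : ⨆ y, |h y| ≤ a + (⨆ y, |h y|) / 2 := ciSup_le (himp _ hM)
  linarith [hM x]

section Perturbation
variable {X : Type*} [MeasurableSpace X]

lemma abs_sub_integral_pow_le {κ : Kernel X X} [IsMarkovKernel κ] {h : X → ℝ} {M a : ℝ}
    (hh : Measurable h) (hhM : ∀ x, |h x| ≤ M) (hstep : ∀ x, |h x - ∫ y, h y ∂κ x| ≤ a)
    (n : ℕ) (x : X) : |h x - ∫ y, h y ∂(κ ^ n) x| ≤ n * a := by
  induction n generalizing x with
  | zero =>
    rw [Kernel.pow_zero_apply, integral_dirac' _ _ hh.stronglyMeasurable]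
    simp
  | succ n ih =>
    have hint_n := measurable_integral_kernel (κ := κ ^ n) hh
    have hsplit : h x - ∫ y, h y ∂(κ ^ (n + 1)) x
        = (h x - ∫ y, h y ∂κ x) + ∫ y, (h y - ∫ z, h z ∂(κ ^ n) y) ∂κ x := by
      rw [Kernel.pow_succ_apply, integral_bind_kernel hh hhM,
        integral_sub (integrable_of_abs_le hh hhM)
          (integrable_of_abs_le hint_n fun y => abs_integral_le_of_abs_le hhM)]
      ring
    rw [hsplit, Nat.cast_succ, add_comm (n : ℝ), add_mul, one_mul]
    exact (abs_add_le _ _).trans (add_le_add (hstep x) (abs_integral_le_of_abs_le ih))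

variable {π : Measure X} [IsProbabilityMeasure π] {κ κ' : Kernel X X} [IsMarkovKernel κ]
  [IsMarkovKernel κ'] {f : X → ℝ} {B C ρ : ℝ}

lemma abs_poissonSol_sub_sub_integral_le (hf : Measurable f) (hfB : ∀ x, |f x| ≤ B)
    (hfπ : ∫ x, f x ∂π = 0) (hρ : ρ ∈ Set.Ico 0 1)
    (hκ : ∀ k x, tvDist ((κ ^ k) x) π ≤ C * ρ ^ k)
    (hκ' : ∀ k x, tvDist ((κ' ^ k) x) π ≤ C * ρ ^ k) (x : X) :
    |(poissonSol κ f x - poissonSol κ' f x) - ∫ y, (poissonSol κ f y - poissonSol κ' f y) ∂κ' x|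
      ≤ 2 * (2 * B * C * (1 - ρ)⁻¹) * tvDist (κ x) (κ' x) := by
  have hg := measurable_poissonSol hf hfB hfπ hρ hκ
  have hgB := abs_poissonSol_le hf hfB hfπ hρ hκ
  have hgB' := abs_poissonSol_le hf hfB hfπ hρ hκ'
  rw [integral_sub (integrable_of_abs_le hg hgB)
    (integrable_of_abs_le (measurable_poissonSol hf hfB hfπ hρ hκ') hgB'),
    poissonSol_eq_add_integral hf hfB hfπ hρ hκ x, poissonSol_eq_add_integral hf hfB hfπ hρ hκ' x]
  calc _ = |∫ y, poissonSol κ f y ∂κ x - ∫ y, poissonSol κ f y ∂κ' x| := by ring_nf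
    _ ≤ _ := abs_integral_sub_integral_le_tvDist hg hgB

lemma abs_poissonSol_sub_le (hf : Measurable f) (hfB : ∀ x, |f x| ≤ B)
    (hfπ : ∫ x, f x ∂π = 0) (hρ : ρ ∈ Set.Ico 0 1)
    (hκ : ∀ k x, tvDist ((κ ^ k) x) π ≤ C * ρ ^ k)
    (hκ' : ∀ k x, tvDist ((κ' ^ k) x) π ≤ C * ρ ^ k) (hπκ : π.bind κ = π)
    (hπκ' : π.bind κ' = π) {m : ℕ} (hm : C * ρ ^ m ≤ 1 / 4) {d : ℝ}
    (hd : ∀ x, tvDist (κ x) (κ' x) ≤ d) (x : X) :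
    |poissonSol κ f x - poissonSol κ' f x| ≤ 4 * m * (2 * B * C * (1 - ρ)⁻¹) * d := by
  set G := 2 * B * C * (1 - ρ)⁻¹
  set h := fun y => poissonSol κ f y - poissonSol κ' f y
  have hgB := abs_poissonSol_le hf hfB hfπ hρ hκ
  have hgB' := abs_poissonSol_le hf hfB hfπ hρ hκ'
  have hg := measurable_poissonSol hf hfB hfπ hρ hκ
  have hg' := measurable_poissonSol hf hfB hfπ hρ hκ'
  have hh : Measurable h := hg.sub hg'
  have hhG : ∀ y, |h y| ≤ 2 * G := fun y =>
    (abs_sub _ _).trans (by linarith [hgB y, hgB' y])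
  have hstep : ∀ y, |h y - ∫ z, h z ∂κ' y| ≤ 2 * G * d := fun y =>
    (abs_poissonSol_sub_sub_integral_le hf hfB hfπ hρ hκ hκ' y).trans
      (mul_le_mul_of_nonneg_left (hd y) (by linarith [abs_nonneg (h y), hhG y]))
  have hπh : ∫ y, h y ∂π = 0 := by
    rw [integral_sub (integrable_of_abs_le hg hgB) (integrable_of_abs_le hg' hgB'),
      integral_poissonSol_eq_zero hf hfB hfπ hρ hκ hπκ,
      integral_poissonSol_eq_zero hf hfB hfπ hρ hκ' hπκ', sub_zero]
  have himp : ∀ M, (∀ y, |h y| ≤ M) → ∀ y, |h y| ≤ m * (2 * G * d) + M / 2 := by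
    intro M hM y
    have hM0 : 0 ≤ M := (abs_nonneg _).trans (hM y)
    have hmix : |∫ z, h z ∂(κ' ^ m) y| ≤ M / 2 := by
      have hTV := abs_integral_sub_integral_le_tvDist (μ := (κ' ^ m) y) (ν := π) hh hM
      rw [hπh, sub_zero] at hTV
      calc _ ≤ 2 * M * tvDist ((κ' ^ m) y) π := hTV
        _ ≤ 2 * M * (C * ρ ^ m) := by gcongr; exact hκ' m y
        _ ≤ M / 2 := by nlinarith
    calc |h y| = |(h y - ∫ z, h z ∂(κ' ^ m) y) + ∫ z, h z ∂(κ' ^ m) y| := by ring_nf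
      _ ≤ m * (2 * G * d) + M / 2 := (abs_add_le _ _).trans
          (add_le_add (abs_sub_integral_pow_le hh hhG hstep m y) hmix)
  calc |h x| ≤ 2 * (m * (2 * G * d)) :=
        abs_le_two_mul_of_abs_le_add_half ⟨2 * G, Set.forall_mem_range.2 hhG⟩ himp x
    _ = 4 * m * G * d := by ring

end Perturbation

section AdaptiveChain
variable {S X : Type*} [MeasurableSpace X] {P : S → X → Measure X}

lemma exists_kernel_coe_eq [MeasurableSpace S]
    (hP : ∀ A : Set X, MeasurableSet A → Measurable fun p : S × X => P p.1 p.2 A) (s : S) :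
    ∃ κ : Kernel X X, ⇑κ = P s :=
  ⟨⟨P s, Measure.measurable_of_measurable_coe _ fun A hA =>
    (hP A hA).comp measurable_prodMk_left⟩, rfl⟩

lemma iterK_eq_pow {κ : Kernel X X} {s : S} (hκ : ⇑κ = P s) (k : ℕ) :
    iterK P s k = ⇑(κ ^ k) := by
  induction k with
  | zero => exact funext fun x => (Kernel.pow_zero_apply κ x).symm
  | succ k ih =>
    funext x
    rw [Kernel.pow_succ_apply, ← ih, hκ]
    rfl

lemma gfun_eq_poissonSol {κ : Kernel X X} {s : S} (hκ : ⇑κ = P s) (π : Measure X)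
    (φ : X → ℝ) : gfun P π φ s = poissonSol κ fun y => φ y - ∫ z, φ z ∂π := by
  funext x
  simp only [gfun, poissonSol, iterK_eq_pow hκ]

lemma exists_abs_gfun_sub_le [MeasurableSpace S] {π : Measure X} [IsProbabilityMeasure π]
    (hPprob : ∀ s x, IsProbabilityMeasure (P s x))
    (hPmeas : ∀ A : Set X, MeasurableSet A → Measurable fun p : S × X => P p.1 p.2 A)
    (hinv : ∀ s, π.bind (P s) = π) {C ρ : ℝ} (hρ : ρ ∈ Set.Ico 0 1)
    (hA2 : ∀ s x k, tvDist (iterK P s k x) π ≤ C * ρ ^ k) {φ : X → ℝ} (hφm : Measurable φ)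
    {B : ℝ} (hφB : ∀ x, |φ x| ≤ B) :
    ∃ K > 0, ∀ s s' x d, (∀ y, tvDist (P s y) (P s' y) ≤ d) →
      |gfun P π φ s x - gfun P π φ s' x| ≤ K * d := by
  set f := fun y => φ y - ∫ z, φ z ∂π
  have hf : Measurable f := hφm.sub measurable_const
  have hfB : ∀ x, |f x| ≤ 2 * B := fun x =>
    (abs_sub _ _).trans (by linarith [hφB x, abs_integral_le_of_abs_le (μ := π) hφB])
  have hfπ : ∫ x, f x ∂π = 0 := by
    simp [f, integral_sub (integrable_of_abs_le hφm hφB) (integrable_const _)]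
  choose κ hκ using exists_kernel_coe_eq hPmeas
  have : ∀ s, IsMarkovKernel (κ s) := fun s => ⟨fun x => hκ s ▸ hPprob s x⟩
  have hκC : ∀ s k x, tvDist ((κ s ^ k) x) π ≤ C * ρ ^ k := fun s k x =>
    iterK_eq_pow (hκ s) k ▸ hA2 s x k
  have hπκ : ∀ s, π.bind (κ s) = π := fun s => (hκ s).symm ▸ hinv s
  obtain ⟨m, hm⟩ : ∃ m : ℕ, C * ρ ^ m ≤ 1 / 4 :=
    (((tendsto_pow_atTop_nhds_zero_of_lt_one hρ.1 hρ.2).const_mul C).eventually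
      (ge_mem_nhds (by norm_num))).exists
  set K₀ := 4 * m * (2 * (2 * B) * C * (1 - ρ)⁻¹)
  refine ⟨|K₀| + 1, by positivity, fun s s' x d hd => ?_⟩
  have hTV : ∀ y, tvDist (κ s y) (κ s' y) ≤ d := fun y => by
    rw [hκ, hκ]
    exact hd y
  rw [gfun_eq_poissonSol (hκ s), gfun_eq_poissonSol (hκ s')]
  refine (abs_poissonSol_sub_le hf hfB hfπ hρ (hκC s) (hκC s') (hπκ s) (hπκ s') hm hTV x).trans ?_
  exact mul_le_mul_of_nonneg_right (by linarith [le_abs_self K₀])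
    ((tvDist_nonneg _ _).trans (hTV x))

end AdaptiveChain

lemma abs_sum_div_le_mul {ι : Type*} {s : Finset ι} {a b : ι → ℝ} {K c : ℝ} (hc : 0 ≤ c)
    (hab : ∀ i ∈ s, |a i| ≤ K * b i) :
    |(∑ i ∈ s, a i) / c| ≤ K * ((∑ i ∈ s, b i) / c) := by
  rw [abs_div, abs_of_nonneg hc, mul_div_assoc', Finset.mul_sum]
  exact div_le_div_of_nonneg_right ((Finset.abs_sum_le_sum_abs _ _).trans
    (Finset.sum_le_sum hab)) hc

lemma MeasureTheory.TendstoInMeasure.of_abs_le_mul {Ω ι : Type*} [MeasurableSpace Ω]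
    {μ : Measure Ω} {l : Filter ι} {a b : ι → Ω → ℝ} {K : ℝ} (hK : 0 < K)
    (hab : ∀ i ω, |a i ω| ≤ K * b i ω) (hb : TendstoInMeasure μ b l fun _ => 0) :
    TendstoInMeasure μ a l fun _ => 0 := by
  rw [tendstoInMeasure_iff_dist] at hb ⊢
  intro ε hε
  refine tendsto_of_tendsto_of_tendsto_of_le_of_le tendsto_const_nhds (hb (ε / K) (by positivity))
    (fun _ => zero_le) fun i => measure_mono fun ω hω => ?_
  simp only [Set.mem_ofPred_eq, Real.dist_eq, sub_zero] at hω ⊢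
  rw [div_le_iff₀ hK, mul_comm]
  exact hω.trans ((hab i ω).trans (mul_le_mul_of_nonneg_left (le_abs_self _) hK.le))

theorem stmt6_general {S X : Type*} [MeasurableSpace S] [MeasurableSpace X]
    (P : S → X → Measure X) (π : Measure X) [IsProbabilityMeasure π]
    (hPprob : ∀ s x, IsProbabilityMeasure (P s x))
    (hPmeas : ∀ A : Set X, MeasurableSet A → Measurable fun p : S × X => P p.1 p.2 A)
    (hinv : ∀ s, π.bind (P s) = π)
    (C ρ : ℝ) (hρ : ρ ∈ Set.Ico (0 : ℝ) 1)
    (hA2 : ∀ s x k, tvDist (iterK P s k x) π ≤ C * ρ ^ k)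
    {Ω : Type*} [mΩ : MeasurableSpace Ω] (μ : Measure Ω)
    (Sp : ℕ → Ω → S) (Xp : ℕ → Ω → X)
    (φ : X → ℝ) (hφm : Measurable φ) (hφb : ∃ B, ∀ x, |φ x| ≤ B)
    (p : ℝ)
    (D : ℕ → Ω → ℝ)
    (hDbound : ∀ k, 1 ≤ k → ∀ ω x,
      tvDist (P (Sp k ω) x) (P (Sp (k - 1) ω) x) ≤ D k ω) :
    (TendstoInMeasure μ (fun n ω => (∑ k ∈ Finset.Icc 1 n, D k ω) / (n : ℝ) ^ p)
        atTop (fun _ => 0) →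
      TendstoInMeasure μ (fun n ω => (∑ k ∈ Finset.Icc 1 n,
          (gfun P π φ (Sp k ω) (Xp k ω) - gfun P π φ (Sp (k - 1) ω) (Xp k ω))) / (n : ℝ) ^ p)
        atTop (fun _ => 0)) ∧
    ((∀ᵐ ω ∂μ, Tendsto (fun n : ℕ => (∑ k ∈ Finset.Icc 1 n, D k ω) / (n : ℝ) ^ p)
        atTop (𝓝 0)) →
      ∀ᵐ ω ∂μ, Tendsto (fun n : ℕ => (∑ k ∈ Finset.Icc 1 n,
          (gfun P π φ (Sp k ω) (Xp k ω) - gfun P π φ (Sp (k - 1) ω) (Xp k ω))) / (n : ℝ) ^ p)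
        atTop (𝓝 0)) := by
  obtain ⟨B, hφB⟩ := hφb
  obtain ⟨K, hK, hgK⟩ := exists_abs_gfun_sub_le hPprob hPmeas hinv hρ hA2 hφm hφB
  have hA : ∀ (n : ℕ) ω, |(∑ k ∈ Finset.Icc 1 n,
      (gfun P π φ (Sp k ω) (Xp k ω) - gfun P π φ (Sp (k - 1) ω) (Xp k ω))) / (n : ℝ) ^ p|
        ≤ K * ((∑ k ∈ Finset.Icc 1 n, D k ω) / (n : ℝ) ^ p) := fun n ω =>
    abs_sum_div_le_mul (Real.rpow_nonneg n.cast_nonneg p) fun k hk =>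
      hgK _ _ _ _ (hDbound k (Finset.mem_Icc.1 hk).1 ω)
  exact ⟨fun hD => hD.of_abs_le_mul hK hA, fun hD => hD.mono fun ω hω =>
    squeeze_zero_norm (hA · ω) (by simpa using hω.const_mul K)⟩

/-- Under (A1), (A2) and weak (resp. strong) `p`-waning
adaptation (A5), the adaptation term satisfies `A_n/n^p → 0` in probability
(resp. almost surely). -/
theorem stmt6 {S X : Type*} [MeasurableSpace S] [MeasurableSpace X]
    (P : S → X → Measure X) (π : Measure X) [IsProbabilityMeasure π]
    (hPprob : ∀ s x, IsProbabilityMeasure (P s x))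
    (hPmeas : ∀ A : Set X, MeasurableSet A → Measurable fun p : S × X => P p.1 p.2 A)
    (hinv : ∀ s, π.bind (P s) = π)
    (C ρ : ℝ) (hρ : ρ ∈ Set.Ico (0 : ℝ) 1)
    (hA2 : ∀ s x k, tvDist (iterK P s k x) π ≤ C * ρ ^ k)
    {Ω : Type*} [mΩ : MeasurableSpace Ω] (μ : Measure Ω) [IsProbabilityMeasure μ]
    (F : Filtration ℕ mΩ) (Sp : ℕ → Ω → S) (Xp : ℕ → Ω → X)
    (hadapted : ∀ k, Measurable[F k] fun ω => (Sp k ω, Xp k ω))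
    (hmarkov : ∀ (k : ℕ) (A : Set X), MeasurableSet A →
      μ[fun ω => A.indicator (fun _ => (1 : ℝ)) (Xp (k + 1) ω) | F k]
        =ᵐ[μ] fun ω => (P (Sp k ω) (Xp k ω) A).toReal)
    (φ : X → ℝ) (hφm : Measurable φ) (hφb : ∃ B, ∀ x, |φ x| ≤ B)
    (p : ℝ) (hp : 0 < p)
    (D : ℕ → Ω → ℝ) (hD01 : ∀ k ω, D k ω ∈ Set.Icc (0 : ℝ) 1)
    (hDbound : ∀ k, 1 ≤ k → ∀ ω x,
      tvDist (P (Sp k ω) x) (P (Sp (k - 1) ω) x) ≤ D k ω) :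
    (TendstoInMeasure μ (fun n ω => (∑ k ∈ Finset.Icc 1 n, D k ω) / (n : ℝ) ^ p)
        atTop (fun _ => 0) →
      TendstoInMeasure μ (fun n ω => (∑ k ∈ Finset.Icc 1 n,
          (gfun P π φ (Sp k ω) (Xp k ω) - gfun P π φ (Sp (k - 1) ω) (Xp k ω))) / (n : ℝ) ^ p)
        atTop (fun _ => 0)) ∧
    ((∀ᵐ ω ∂μ, Tendsto (fun n : ℕ => (∑ k ∈ Finset.Icc 1 n, D k ω) / (n : ℝ) ^ p)
        atTop (𝓝 0)) →
      ∀ᵐ ω ∂μ, Tendsto (fun n : ℕ => (∑ k ∈ Finset.Icc 1 n,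
          (gfun P π φ (Sp k ω) (Xp k ω) - gfun P π φ (Sp (k - 1) ω) (Xp k ω))) / (n : ℝ) ^ p)
        atTop (𝓝 0)) :=
  stmt6_general P π hPprob hPmeas hinv C ρ hρ hA2 (mΩ := mΩ) μ Sp Xp φ hφm hφb p D hDbound
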